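/- Let L be a divisorial principally generated C-lattice lattice domain and let c ∈ L be nonzero such that (c·z : c) = z for every nonzero principal element z of L. Then c is a principal element. -/

import Mathlib

/-- A multiplicative lattice: a complete lattice (bottom `⊥` playing the role of `0`)
which is a commutative monoid whose identity `1` is the top element, and in which
multiplication distributes over arbitrary joins. -/
class MulLattice (L : Type*) extends CompleteLattice L, CommMonoid L where
  one_eq_top : (1 : L) = ⊤
  mul_sSup : ∀ (a : L) (S : Set L), a * sSup S = ⨆ b ∈ S, a * b

namespace MulLattice

variable {L : Type*} [MulLattice L]

/-- The residual `(y : x) = ⋁ {a | a * x ≤ y}`. -/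
def res (y x : L) : L := sSup {a : L | a * x ≤ y}

/-- `x` is meet-principal: `y ⊓ z * x = ((y : x) ⊓ z) * x` for all `y, z`. -/
def IsMeetPrincipal (x : L) : Prop := ∀ y z : L, y ⊓ z * x = (res y x ⊓ z) * x

/-- `x` is join-principal: `y ⊔ (z : x) = ((y * x ⊔ z) : x)` for all `y, z`. -/
def IsJoinPrincipal (x : L) : Prop := ∀ y z : L, y ⊔ res z x = res (y * x ⊔ z) x

/-- `x` is principal if it is both meet-principal and join-principal. -/
def IsPrincipal (x : L) : Prop := IsMeetPrincipal x ∧ IsJoinPrincipal x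

/-- A prime element: a proper element `p` with `x * y ≤ p → x ≤ p ∨ y ≤ p`. -/
def IsPrime (p : L) : Prop := p ≠ 1 ∧ ∀ x y : L, x * y ≤ p → x ≤ p ∨ y ≤ p

/-- A maximal element: an element maximal in `L - {1}`. -/
def IsMaximal (m : L) : Prop := m ≠ 1 ∧ ∀ b : L, m < b → b = 1

end MulLattice

/-- A principally generated C-lattice: a multiplicative lattice in which `1` is compact,
compact elements are closed under multiplication, every element is a join of compact
elements and every element is a join of principal elements. -/
class PGCLattice (L : Type*) extends MulLattice L where
  top_isCompact : IsCompactElement (⊤ : L)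
  compact_mul : ∀ a b : L, IsCompactElement a →
    IsCompactElement b → IsCompactElement (a * b)
  compactly_generated : ∀ a : L,
    a = sSup {c : L | IsCompactElement c ∧ c ≤ a}
  principally_generated : ∀ a : L,
    a = sSup {x : L | MulLattice.IsPrincipal x ∧ x ≤ a}

namespace MulLattice

variable {L : Type*}

/-- A lattice domain: `0 = ⊥` is a prime element. -/
def IsLatticeDomain (L : Type*) [MulLattice L] : Prop := IsPrime (⊥ : L)

variable [PGCLattice L]

open Classical in
/-- The divisorial (`v`-)closure of `a`: equals `(x : (x : a))` for a nonzero principal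
`x ≤ a` when such an `x` exists (in a lattice domain this is independent of the choice
of `x`), and `⊥` otherwise (in particular `vclos ⊥ = ⊥`). -/
noncomputable def vclos (a : L) : L :=
  if h : ∃ x : L, IsPrincipal x ∧ x ≠ ⊥ ∧ x ≤ a then
    res h.choose (res h.choose a)
  else ⊥

/-- `a` is divisorial if `a = a_v`. -/
def IsDivisorial (a : L) : Prop := vclos a = a

/-- `L` is h-local: every nonzero prime is below a unique maximal element and
every nonzero element is below only finitely many maximal elements. -/
def IsHLocal (L : Type*) [PGCLattice L] : Prop :=
  (∀ r : L, r ≠ ⊥ → IsPrime r → ∃! m : L, IsMaximal m ∧ r ≤ m) ∧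
  (∀ b : L, b ≠ ⊥ → {m : L | IsMaximal m ∧ b ≤ m}.Finite)

end MulLattice

open MulLattice

/-!
Pick a nonzero principal `x ≤ c` and put `b = (x : c)`, so that `b c ≤ x`. A factor of a
nonzero principal element of a lattice domain is principal, so it suffices to show `b c = x`.
In a divisorial domain `a = (p : (p : a))` for every nonzero principal `p ≤ a`; take
`p = x²`. Cancelling `x` gives `(x² : x c) = b`, hence `x c = (x² : b)`. So `t b c ≤ x²` forces
`t c ≤ x c`, i.e. `t ≤ (x c : c) = x`; thus `(x² : b c) ≤ x`, and
`b c = (x² : (x² : b c)) ≥ (x² : x) = x`.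
-/

namespace MulLattice

section

variable {L : Type*} [MulLattice L] {a b c w x y : L}

/- With this instance `res y x` is, by definition, the left residuation `x ⇨ₗ y`. -/
instance : IsQuantale L where
  mul_sSup_distrib := mul_sSup
  sSup_mul_distrib s y := by simp only [mul_comm _ y]; exact mul_sSup y s

theorem le_res_iff : a ≤ res y x ↔ a * x ≤ y :=
  Quantale.leftMulResiduation_le_iff_mul_le

theorem res_mul_le (y x : L) : res y x * x ≤ y :=
  le_res_iff.mp le_rfl

theorem res_mono_left (x : L) : Monotone (res · x) :=
  fun _ _ h => le_res_iff.mpr ((res_mul_le _ x).trans h)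

theorem res_antitone_right (y : L) : Antitone (res y) :=
  fun _ _ h => le_res_iff.mpr ((mul_le_mul_right h _).trans (res_mul_le y _))

theorem mul_le_left (a b : L) : a * b ≤ a :=
  mul_le_of_le_one_right' (one_eq_top (L := L) ▸ le_top)

theorem res_mul_right (y p q : L) : res y (p * q) = res (res y p) q :=
  eq_of_forall_le_iff fun t => by
    rw [le_res_iff, le_res_iff, le_res_iff, mul_right_comm, mul_assoc]

theorem IsLatticeDomain.mul_ne_bot (hL : IsLatticeDomain L) (ha : a ≠ ⊥) (hb : b ≠ ⊥) :
    a * b ≠ ⊥ := fun hab =>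
  (hL.2 a b hab.le).elim (ha <| le_bot_iff.mp ·) (hb <| le_bot_iff.mp ·)

theorem IsLatticeDomain.res_bot (hL : IsLatticeDomain L) (hx : x ≠ ⊥) : res ⊥ x = ⊥ :=
  by_contra fun h => hL.mul_ne_bot h hx (le_bot_iff.mp (res_mul_le ⊥ x))

theorem IsMeetPrincipal.res_mul_eq (hx : IsMeetPrincipal x) (hw : w ≤ x) :
    res w x * x = w := by
  have h := hx w 1
  rwa [one_mul, inf_eq_left.mpr hw, one_eq_top, inf_top_eq, eq_comm] at h

section Cancellation

variable (hL : IsLatticeDomain L) (hx : IsJoinPrincipal x) (hx0 : x ≠ ⊥)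
include hL hx hx0

theorem IsJoinPrincipal.res_mul_cancel (a : L) : res (a * x) x = a := by
  simpa [hL.res_bot hx0] using (hx a ⊥).symm

theorem IsJoinPrincipal.mul_le_mul_iff_right : a * x ≤ b * x ↔ a ≤ b :=
  ⟨fun h => hx.res_mul_cancel hL hx0 b ▸ le_res_iff.mpr h, (mul_le_mul_left · x)⟩

theorem IsJoinPrincipal.res_mul_mul_right (y z : L) : res (y * x) (z * x) = res y z :=
  eq_of_forall_le_iff fun t => by
    rw [le_res_iff, le_res_iff, ← mul_assoc, hx.mul_le_mul_iff_right hL hx0]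

end Cancellation

theorem IsPrincipal.mul {p q : L} (hp : IsPrincipal p) (hq : IsPrincipal q) :
    IsPrincipal (p * q) := by
  constructor
  · intro y z
    rw [← mul_assoc, mul_right_comm, hp.1 y, hq.1, ← res_mul_right, mul_assoc, mul_comm q p]
  · intro y z
    rw [res_mul_right, res_mul_right, hq.2, hp.2, mul_right_comm, mul_assoc]

theorem res_mul_le_res_of_mul_eq (hL : IsLatticeDomain L) (hx : IsJoinPrincipal x)
    (hx0 : x ≠ ⊥) (hbc : b * c = x) (y : L) : res (y * b) x ≤ res y c := by
  rw [le_res_iff, ← hx.mul_le_mul_iff_right hL hx0]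
  calc res (y * b) x * c * x = res (y * b) x * x * c := mul_right_comm _ _ _
    _ ≤ y * b * c := mul_le_mul_left (res_mul_le _ x) c
    _ = y * x := by rw [mul_assoc, hbc]

theorem IsPrincipal.of_mul_eq (hL : IsLatticeDomain L) (hx : IsPrincipal x) (hx0 : x ≠ ⊥)
    (hbc : b * c = x) : IsPrincipal c := by
  have hres := res_mul_le_res_of_mul_eq hL hx.2 hx0 hbc
  constructor
  · intro y z
    refine le_antisymm ?_ (le_inf ((mul_le_mul_left inf_le_left c).trans (res_mul_le y c))
      (mul_le_mul_left inf_le_right c))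
    have hb : (y ⊓ z * c) * b ≤ (res (y * b) x ⊓ z) * x := by
      rw [← hx.1]
      refine le_inf (mul_le_mul_left inf_le_left b) ?_
      calc (y ⊓ z * c) * b ≤ z * c * b := mul_le_mul_left inf_le_right b
        _ = z * x := by rw [mul_assoc, mul_comm c, hbc]
    calc y ⊓ z * c ≤ (res (y * b) x ⊓ z) * c := by
          rw [← hx.2.mul_le_mul_iff_right hL hx0]
          calc (y ⊓ z * c) * x = (y ⊓ z * c) * b * c := by rw [mul_assoc, hbc]
            _ ≤ (res (y * b) x ⊓ z) * x * c := mul_le_mul_left hb c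
            _ = (res (y * b) x ⊓ z) * c * x := mul_right_comm _ _ _
      _ ≤ (res y c ⊓ z) * c := mul_le_mul_left (inf_le_inf_right z (hres y)) c
  · intro y z
    refine le_antisymm (sup_le (le_res_iff.mpr le_sup_left) (res_mono_left c le_sup_right)) ?_
    have hx' : res (y * c ⊔ z) c * x ≤ y * x ⊔ z * b :=
      calc res (y * c ⊔ z) c * x = res (y * c ⊔ z) c * c * b := by
            rw [← hbc, mul_comm b, mul_assoc]
        _ ≤ (y * c ⊔ z) * b := mul_le_mul_left (res_mul_le _ c) b
        _ = y * x ⊔ z * b := by rw [Quantale.sup_mul_distrib, mul_assoc, mul_comm c, hbc]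
    calc res (y * c ⊔ z) c ≤ y ⊔ res (z * b) x := hx.2 y (z * b) ▸ le_res_iff.mpr hx'
      _ ≤ y ⊔ res z c := sup_le_sup_left (hres z) y

theorem mul_res_le_mul_res (hL : IsLatticeDomain L) (hx : IsPrincipal x) (hx0 : x ≠ ⊥)
    (hya : y ≤ a) : y * res x a ≤ x * res y a := by
  have hw : y * res x a ≤ x :=
    (mul_le_mul_left hya _).trans (mul_comm a (res x a) ▸ res_mul_le x a)
  have hres : res (y * res x a) x ≤ res y a := by
    rw [le_res_iff, ← hx.2.mul_le_mul_iff_right hL hx0, mul_right_comm,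
      hx.1.res_mul_eq hw, mul_assoc]
    exact mul_le_mul_right (res_mul_le x a) y
  calc y * res x a = res (y * res x a) x * x := (hx.1.res_mul_eq hw).symm
    _ ≤ x * res y a := mul_comm x (res y a) ▸ mul_le_mul_left hres x

theorem res_res_le_res_res (hL : IsLatticeDomain L) (hx : IsPrincipal x) (hx0 : x ≠ ⊥)
    (hy : IsJoinPrincipal y) (hy0 : y ≠ ⊥) (hya : y ≤ a) :
    res y (res y a) ≤ res x (res x a) := by
  rw [le_res_iff, ← hy.mul_le_mul_iff_right hL hy0]
  calc res y (res y a) * res x a * y = res y (res y a) * (y * res x a) := by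
        rw [mul_assoc, mul_comm (res x a)]
    _ ≤ res y (res y a) * (x * res y a) := mul_le_mul_right (mul_res_le_mul_res hL hx hx0 hya) _
    _ = x * (res y (res y a) * res y a) := mul_left_comm _ _ _
    _ ≤ x * y := mul_le_mul_right (res_mul_le _ _) x

end

variable {L : Type*} [PGCLattice L] {a : L}

theorem exists_principal_le (ha : a ≠ ⊥) : ∃ p : L, IsPrincipal p ∧ p ≠ ⊥ ∧ p ≤ a := by
  by_contra! h
  refine ha (le_bot_iff.mp ?_)
  rw [PGCLattice.principally_generated a]
  exact sSup_le fun p hp => le_bot_iff.mpr (by_contra fun hp0 => h p hp.1 hp0 hp.2)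

theorem res_res_eq_of_isDivisorial (hL : IsLatticeDomain L) (ha : IsDivisorial a) {x : L}
    (hx : IsPrincipal x) (hx0 : x ≠ ⊥) (hxa : x ≤ a) : res x (res x a) = a := by
  have hex : ∃ z : L, IsPrincipal z ∧ z ≠ ⊥ ∧ z ≤ a := ⟨x, hx, hx0, hxa⟩
  rw [IsDivisorial, vclos, dif_pos hex] at ha
  obtain ⟨hz, hz0, hza⟩ := hex.choose_spec
  calc res x (res x a) = res hex.choose (res hex.choose a) :=
        le_antisymm (res_res_le_res_res hL hz hz0 hx.2 hx0 hxa)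
          (res_res_le_res_res hL hx hx0 hz.2 hz0 hza)
    _ = a := ha

end MulLattice

theorem stmt16 {L : Type*} [PGCLattice L] (hL : IsLatticeDomain L)
    (hdiv : ∀ a : L, IsDivisorial a)
    (c : L) (hc : c ≠ ⊥)
    (h : ∀ z : L, z ≠ ⊥ → IsPrincipal z → res (c * z) c = z) :
    IsPrincipal c := by
  obtain ⟨x, hx, hx0, hxc⟩ := exists_principal_le hc
  set b := res x c
  have hxb : x ≤ b := le_res_iff.mpr (mul_le_left x c)
  have hxx : IsPrincipal (x * x) := hx.mul hx
  have hxx0 : x * x ≠ ⊥ := hL.mul_ne_bot hx0 hx0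
  have hcx : res (x * x) b = c * x := by
    rw [show b = res (x * x) (c * x) from (hx.2.res_mul_mul_right hL hx0 x c).symm]
    exact res_res_eq_of_isDivisorial hL (hdiv _) hxx hxx0 (mul_le_mul_left hxc x)
  have hdual : res (x * x) (b * c) ≤ x := by
    refine (le_res_iff.mpr ?_).trans_eq (h x hx0 hx)
    rw [← hcx, le_res_iff, mul_assoc, mul_comm c b]
    exact res_mul_le _ _
  have hxbc : x ≤ b * c :=
    calc x = res (x * x) x := (hx.2.res_mul_cancel hL hx0 x).symm
      _ ≤ res (x * x) (res (x * x) (b * c)) := res_antitone_right _ hdual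
      _ = b * c := res_res_eq_of_isDivisorial hL (hdiv _) hxx hxx0 (mul_le_mul' hxb hxc)
  exact hx.of_mul_eq hL hx0 ((res_mul_le x c).antisymm hxbc)
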